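/- arXiv:1809.01077 — 2 statements merged into one kernel-verified Lean document; each statement's English description precedes it below -/
import Mathlib

section
/- Let N ≥ 1, b = 2N, and let A be an integer with 1 ≤ A ≤ 2^N. Define R = (A·(3/4)^b + 2^N·(1/4)^b) / (2^N·(3/4)^b + A·(1/4)^b). Then (A/2^N)·(1 − 1/4^N) ≤ R ≤ (A/2^N)·(1 + 1/4^N). -/
/-!
Write `x = (3/4)^b`, `y = (1/4)^b`, `P = 2^N`, so `R = (A x + P y) / (P x + A y)`.
Cross-multiplying, `P (A x + P y) - A (P x + A y) = (P² - A²) y ≥ 0`, so already `A / P ≤ R`.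
For the upper bound, dropping `A y` from the denominator gives `R ≤ A / P + y / x`, and
`y / x ≤ 4^{-N} A / P` because `A ≥ 1` and `P y = 8^{-N} ≤ (9/64)^N = 4^{-N} x`.
-/

section SwappedRatio

variable {K : Type*} [Field K] [LinearOrder K] [IsStrictOrderedRing K] {a p x y ε : K}

theorem div_le_swapped_ratio (hp : 0 < p) (hx : 0 < x) (hy : 0 ≤ y) (ha : 0 ≤ a) (hap : a ≤ p) :
    a / p ≤ (a * x + p * y) / (p * x + a * y) := by
  rw [div_le_div_iff₀ hp (by positivity)]
  nlinarith [mul_le_mul_of_nonneg_right (mul_self_le_mul_self ha hap) hy]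

theorem swapped_ratio_le_div_mul_one_add (hp : 0 < p) (hx : 0 < x) (hy : 0 ≤ y) (ha : 0 ≤ a)
    (hpy : p * y ≤ ε * a * x) :
    (a * x + p * y) / (p * x + a * y) ≤ a / p * (1 + ε) :=
  calc (a * x + p * y) / (p * x + a * y) ≤ (a * x + p * y) / (p * x) :=
        div_le_div_of_nonneg_left (by positivity) (by positivity) (by nlinarith)
    _ ≤ a / p * (1 + ε) := by
        rw [div_le_iff₀ (by positivity)]
        field_simp
        linarith

end SwappedRatio

theorem two_pow_mul_quarter_pow_le (N : ℕ) :
    (2 : ℝ) ^ N * (1 / 4) ^ (2 * N) ≤ 1 / 4 ^ N * (3 / 4) ^ (2 * N) := by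
  have lhs : (2 : ℝ) ^ N * (1 / 4) ^ (2 * N) = (1 / 8) ^ N := by
    rw [pow_mul, ← mul_pow]; norm_num
  have rhs : (1 : ℝ) / 4 ^ N * (3 / 4) ^ (2 * N) = (9 / 64) ^ N := by
    rw [pow_mul, one_div, ← inv_pow, ← mul_pow]; norm_num
  rw [lhs, rhs]
  exact pow_le_pow_left₀ (by norm_num) (by norm_num) N

theorem stmt_14_general (N : ℕ) (b : ℕ) (hb : b = 2 * N)
    (A : ℕ) (hA1 : 1 ≤ A) (hA2 : A ≤ 2^N)
    (R : ℝ)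
    (hR : R = ((A:ℝ) * (3/4:ℝ)^b + (2:ℝ)^N * (1/4:ℝ)^b) /
      ((2:ℝ)^N * (3/4:ℝ)^b + (A:ℝ) * (1/4:ℝ)^b)) :
    ((A:ℝ)/2^N) * (1 - 1/4^N) ≤ R ∧ R ≤ ((A:ℝ)/2^N) * (1 + 1/4^N) := by
  subst hb hR
  have hA : (1 : ℝ) ≤ A := by exact_mod_cast hA1
  have hAP : (A : ℝ) ≤ 2 ^ N := by exact_mod_cast hA2
  constructor
  · calc (A : ℝ) / 2 ^ N * (1 - 1 / 4 ^ N) ≤ A / 2 ^ N :=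
          mul_le_of_le_one_right (by positivity) (by simp only [sub_le_self_iff]; positivity)
      _ ≤ _ := div_le_swapped_ratio (by positivity) (by positivity) (by positivity)
          (by positivity) hAP
  · refine swapped_ratio_le_div_mul_one_add (by positivity) (by positivity) (by positivity)
      (by positivity) ?_
    calc (2 : ℝ) ^ N * (1 / 4) ^ (2 * N) ≤ 1 / 4 ^ N * (3 / 4) ^ (2 * N) :=
          two_pow_mul_quarter_pow_le N
      _ ≤ 1 / 4 ^ N * A * (3 / 4) ^ (2 * N) := by
          gcongr ?_ * _; exact le_mul_of_one_le_right (by positivity) hA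

theorem stmt_14 (N : ℕ) (hN : 1 ≤ N) (b : ℕ) (hb : b = 2 * N)
    (A : ℕ) (hA1 : 1 ≤ A) (hA2 : A ≤ 2^N)
    (R : ℝ)
    (hR : R = ((A:ℝ) * (3/4:ℝ)^b + (2:ℝ)^N * (1/4:ℝ)^b) /
      ((2:ℝ)^N * (3/4:ℝ)^b + (A:ℝ) * (1/4:ℝ)^b)) :
    ((A:ℝ)/2^N) * (1 - 1/4^N) ≤ R ∧ R ≤ ((A:ℝ)/2^N) * (1 + 1/4^N) :=
  stmt_14_general N b hb A hA1 hA2 R hR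
end

section
/- Let N ≥ 1, b = 2N, 1 ≤ A ≤ 2^N an integer, and R = (A·(3/4)^b + 2^N·(1/4)^b)/(2^N·(3/4)^b + A·(1/4)^b). Then |R − A/2^N| < 1/2^{N+1}, so rounding R to the nearest multiple of 2^{−N} yields exactly A/2^N. -/
/-!
Write `x = (3/4)^b`, `y = (1/4)^b` and `M = 2^N`. Then
`R - A/M = y (M² - A²) / (M (M x + A y))`, which lies between `0` and `y / x = 9⁻ᴺ` because
`0 ≤ A ≤ M`; and `9⁻ᴺ < 2⁻⁽ᴺ⁺¹⁾` as soon as `N ≥ 1`. Scaling by `M` puts `M R` within `1/2`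
of the integer `A`, so it rounds to `A`.
-/

section Ratio

variable {K : Type*} [Field K]

theorem ratio_sub_div_eq {A M x y : K} (hM : M ≠ 0) (hD : M * x + A * y ≠ 0) :
    (A * x + M * y) / (M * x + A * y) - A / M = y * (M ^ 2 - A ^ 2) / (M * (M * x + A * y)) := by
  rw [div_sub_div _ _ hD hM]
  ring

variable [LinearOrder K] [IsStrictOrderedRing K]

theorem abs_ratio_sub_div_le {A M x y : K} (hA : 0 ≤ A) (hAM : A ≤ M) (hM : 0 < M) (hx : 0 < x)
    (hy : 0 ≤ y) : |(A * x + M * y) / (M * x + A * y) - A / M| ≤ y / x := by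
  have hMx : 0 < M * x := mul_pos hM hx
  have hD : M * x ≤ M * x + A * y := le_add_of_nonneg_right (mul_nonneg hA hy)
  have hsq : 0 ≤ M ^ 2 - A ^ 2 := sub_nonneg.2 (pow_le_pow_left₀ hA hAM 2)
  rw [ratio_sub_div_eq hM.ne' (hMx.trans_le hD).ne', abs_of_nonneg (by positivity)]
  calc y * (M ^ 2 - A ^ 2) / (M * (M * x + A * y))
      ≤ y * M ^ 2 / (M * (M * x)) := by
        gcongr
        exact sub_le_self _ (sq_nonneg A)
    _ = y / x := by field_simp

end Ratio

theorem round_eq_of_abs_sub_lt_half {α : Type*} [Field α] [LinearOrder α] [IsStrictOrderedRing α]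
    [FloorRing α] {x : α} {n : ℤ} (h : |x - n| < 1 / 2) : round x = n := by
  rw [abs_lt] at h
  rw [round_eq_iff]
  constructor <;> linarith

theorem two_pow_succ_lt_nine_pow {N : ℕ} (hN : 1 ≤ N) : 2 ^ (N + 1) < 9 ^ N := by
  obtain ⟨k, rfl⟩ := Nat.exists_eq_add_of_le' hN
  calc 2 ^ (k + 1 + 1) = 4 * 2 ^ k := by ring
    _ < 9 * 9 ^ k := by
      have := Nat.pow_le_pow_left (show 2 ≤ 9 by norm_num) k
      have := Nat.one_le_pow k 9 (by norm_num)
      omega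
    _ = 9 ^ (k + 1) := by ring

theorem stmt_15_general (N : ℕ) (hN : 1 ≤ N) (b : ℕ) (hb : b = 2 * N)
    (A : ℕ) (hA2 : A ≤ 2^N)
    (R : ℝ)
    (hR : R = ((A:ℝ) * (3/4:ℝ)^b + (2:ℝ)^N * (1/4:ℝ)^b) /
      ((2:ℝ)^N * (3/4:ℝ)^b + (A:ℝ) * (1/4:ℝ)^b)) :
    |R - (A:ℝ)/2^N| < 1/2^(N+1) ∧ round ((2:ℝ)^N * R) = (A : ℤ) := by
  have hM : (0:ℝ) < 2 ^ N := by positivity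
  have hAM : (A:ℝ) ≤ 2 ^ N := by exact_mod_cast hA2
  have hyx : (1/4:ℝ) ^ b / (3/4) ^ b = (1/9) ^ N := by
    rw [hb, ← div_pow, pow_mul]
    norm_num
  have hgap : (1/9:ℝ) ^ N < 1 / 2 ^ (N + 1) := by
    rw [one_div_pow, one_div_lt_one_div (by positivity) (by positivity)]
    exact_mod_cast two_pow_succ_lt_nine_pow hN
  have herr : |R - A / 2 ^ N| < 1 / 2 ^ (N + 1) := by
    rw [hR]
    calc _ ≤ (1/4:ℝ) ^ b / (3/4) ^ b :=
          abs_ratio_sub_div_le A.cast_nonneg hAM hM (by positivity) (by positivity)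
      _ < _ := hyx ▸ hgap
  refine ⟨herr, round_eq_of_abs_sub_lt_half ?_⟩
  calc |2 ^ N * R - ((A : ℤ) : ℝ)| = |2 ^ N * (R - A / 2 ^ N)| := by
        rw [Int.cast_natCast, mul_sub, mul_div_cancel₀ _ hM.ne']
    _ = 2 ^ N * |R - A / 2 ^ N| := by rw [abs_mul, abs_of_pos hM]
    _ < 2 ^ N * (1 / 2 ^ (N + 1)) := by gcongr
    _ = 1 / 2 := by
        rw [pow_succ]
        field_simp

theorem stmt_15 (N : ℕ) (hN : 1 ≤ N) (b : ℕ) (hb : b = 2 * N)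
    (A : ℕ) (hA1 : 1 ≤ A) (hA2 : A ≤ 2^N)
    (R : ℝ)
    (hR : R = ((A:ℝ) * (3/4:ℝ)^b + (2:ℝ)^N * (1/4:ℝ)^b) /
      ((2:ℝ)^N * (3/4:ℝ)^b + (A:ℝ) * (1/4:ℝ)^b)) :
    |R - (A:ℝ)/2^N| < 1/2^(N+1) ∧ round ((2:ℝ)^N * R) = (A : ℤ) :=
  stmt_15_general N hN b hb A hA2 R hR
end
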